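/- Let a ≠ 0 and let X, Y, P₁, P₂ be real numbers with X ≠ Y, X ≠ 0, Y ≠ 0 and XY < 0. Define x = (2X + 2Y − ω₁ + 4ω₂)/(4a), y = √(−XY)/a, p_x = 2a(X·P₁ − Y·P₂)/(X−Y), p_y = 2a√(−XY)·(P₁−P₂)/(X−Y). Then K_KdV5(p_x,p_y,x,y) = (4X·Φ(Y,P₂) − 4Y·Φ(X,P₁))/(X−Y); that is, the second KdV₅ integral takes generalized Stäckel form in the separated variables. -/
import Mathlib


/-- The KdV₅ second integral. -/
noncomputable def KKdV5 (a ω₁ ω₂ μ : ℝ) (px py x y : ℝ) : ℝ :=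
  4*a*y*px*py + (4*ω₂ - ω₁ - 4*a*x)*(py^2 + μ/y^2)
    + a^2*y^4 + 4*a^2*x^2*y^2 + 4*a*ω₂*x*y^2 + ω₂*(4*ω₂ - ω₁)*y^2

/-- The auxiliary Stäckel function `Φ(ξ,π)`. -/
noncomputable def PhiKdV5 (a ω₁ ω₂ μ : ℝ) (ξ π : ℝ) : ℝ :=
  (4*ξ^5 + (-4*ω₁ + 24*ω₂)*ξ^4 + (ω₁ - 4*ω₂)*(ω₁ - 12*ω₂)*ξ^3
    + (32*a^4*π^2 + 2*ω₁^2*ω₂ - 16*ω₁*ω₂^2 + 32*ω₂^3)*ξ^2 + 8*μ*a^4) / (16*ξ*a^2)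

set_option maxHeartbeats 2000000 in
/-- in the canonical separated variables `(P₁,X,P₂,Y)`, the second KdV₅
integral takes the generalized Stäckel form `K = (4X·Φ(Y,P₂) − 4Y·Φ(X,P₁))/(X−Y)`. -/
theorem KKdV5_separated_form (a ω₁ ω₂ μ : ℝ) (ha : a ≠ 0)
    (X Y P₁ P₂ : ℝ) (hXY : X ≠ Y) (hX : X ≠ 0) (hY : Y ≠ 0) (hneg : X*Y < 0) :
    KKdV5 a ω₁ ω₂ μ
        (2*a*(X*P₁ - Y*P₂)/(X - Y))
        (2*a*Real.sqrt (-(X*Y))*(P₁ - P₂)/(X - Y))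
        ((2*X + 2*Y - ω₁ + 4*ω₂)/(4*a))
        (Real.sqrt (-(X*Y))/a)
      = (4*X*PhiKdV5 a ω₁ ω₂ μ Y P₂ - 4*Y*PhiKdV5 a ω₁ ω₂ μ X P₁) / (X - Y) := by
  have hs2 : (Real.sqrt (-(X*Y)))^2 = -(X*Y) := Real.sq_sqrt (by linarith)
  have hs : Real.sqrt (-(X*Y)) ≠ 0 := ne_of_gt (Real.sqrt_pos.mpr (by linarith))
  have hXYd : X - Y ≠ 0 := sub_ne_zero.mpr hXY
  unfold KKdV5 PhiKdV5
  generalize Real.sqrt (-(X*Y)) = s at hs2 hs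
  have h4 : s^4 = (X*Y)^2 := by rw [show (4:ℕ) = 2*2 from rfl, pow_mul, hs2]; ring
  have h6 : s^6 = -(X*Y)^3 := by rw [show (6:ℕ) = 2*3 from rfl, pow_mul, hs2]; ring
  have h8 : s^8 = (X*Y)^4 := by rw [show (8:ℕ) = 2*4 from rfl, pow_mul, hs2]; ring
  field_simp
  ring_nf
  rw [h6, h4, hs2]
  ring
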